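/- Let γ, θ_α ∈ (0,1), ρ ≥ 0, x ∈ ℝⁿ, and d ∈ ℝⁿ with d ≠ 0, and set Δ := Δl(d,ρ;x); assume Δ > 0. Suppose there exists τ > 0 such that φ(x+αd,ρ) − φ(x,ρ) ≤ −αΔ + τα²‖d‖₂² for all α ∈ (0,1]. Then there exists j ∈ ℕ with φ(x+γʲd,ρ) − φ(x,ρ) ≤ −θ_αγʲΔ, and the largest α* ∈ {γʲ : j ∈ ℕ} satisfying φ(x+α*d,ρ) − φ(x,ρ) ≤ −θ_αα*Δ obeys α* ≥ min(1, γ(1−θ_α)Δ / (τ‖d‖₂²)). -/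
import Mathlib


open scoped RealInnerProductSpace
open Finset Filter

noncomputable section

/-- `ℝⁿ` with the Euclidean norm. -/
abbrev Evec (n : ℕ) : Type := EuclideanSpace ℝ (Fin n)

variable {n m : ℕ}

/-- Apply a matrix to a Euclidean vector. -/
def matApply (M : Matrix (Fin n) (Fin n) ℝ) (x : Evec n) : Evec n := Matrix.toEuclideanLin M x

/-- Constraint violation measure `v(x) = Σ_{i≤m̄} |cᵢ(x)| + Σ_{i>m̄} max(cᵢ(x),0)`
(indices with `i.val < mbar` are the equality constraints). -/
def vmeas (mbar : ℕ) (c : Fin m → Evec n → ℝ) (x : Evec n) : ℝ :=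
  ∑ i : Fin m, if (i : ℕ) < mbar then |c i x| else max (c i x) 0

/-- Exact penalty function `φ(x,ρ) = ρ f(x) + v(x)`. -/
def phipen (mbar : ℕ) (f : Evec n → ℝ) (c : Fin m → Evec n → ℝ) (x : Evec n) (ρ : ℝ) : ℝ :=
  ρ * f x + vmeas mbar c x

/-- Linearized model
`l(d,ρ;x) = ρ⟨∇f(x),d⟩ + Σ_{i≤m̄} |cᵢ(x)+⟨∇cᵢ(x),d⟩| + Σ_{i>m̄} max(cᵢ(x)+⟨∇cᵢ(x),d⟩,0)`. -/
def lmod (mbar : ℕ) (f : Evec n → ℝ) (c : Fin m → Evec n → ℝ) (x : Evec n) (ρ : ℝ)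
    (d : Evec n) : ℝ :=
  ρ * ⟪gradient f x, d⟫ +
    ∑ i : Fin m, if (i : ℕ) < mbar then |c i x + ⟪gradient (c i) x, d⟫|
      else max (c i x + ⟪gradient (c i) x, d⟫) 0

/-- Model reduction `Δl(d,ρ;x) = l(0,ρ;x) − l(d,ρ;x)`. -/
def Deltal (mbar : ℕ) (f : Evec n → ℝ) (c : Fin m → Evec n → ℝ) (x : Evec n) (ρ : ℝ)
    (d : Evec n) : ℝ :=
  lmod mbar f c x ρ 0 - lmod mbar f c x ρ d

/-- Backtracking line search.  Let `γ, θ_α ∈ (0,1)`, `ρ ≥ 0`, `d ≠ 0`, and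
`Δ := Δl(d,ρ;x) > 0`.  Suppose there is `τ > 0` with
`φ(x+αd,ρ) − φ(x,ρ) ≤ −αΔ + τα²‖d‖²` for all `α ∈ (0,1]`.  Then some `γʲ` satisfies the
sufficient-decrease condition `φ(x+γʲd,ρ) − φ(x,ρ) ≤ −θ_αγʲΔ`, and the largest such
`α* = γʲ` obeys `α* ≥ min(1, γ(1−θ_α)Δ/(τ‖d‖²))`. -/
theorem statement_14
    (n m mbar : ℕ) (hn : 1 ≤ n) (hmm : mbar ≤ m)
    (f : Evec n → ℝ) (c : Fin m → Evec n → ℝ)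
    (hf : ContDiff ℝ 1 f) (hc : ∀ i, ContDiff ℝ 1 (c i))
    (γ θα : ℝ) (hγ : γ ∈ Set.Ioo (0:ℝ) 1) (hθα : θα ∈ Set.Ioo (0:ℝ) 1)
    (ρ : ℝ) (hρ : 0 ≤ ρ)
    (x d : Evec n) (hd : d ≠ 0)
    (hΔ : 0 < Deltal mbar f c x ρ d)
    (τ : ℝ) (hτ : 0 < τ)
    (hdesc : ∀ α ∈ Set.Ioc (0:ℝ) 1,
      phipen mbar f c (x + α • d) ρ - phipen mbar f c x ρ
        ≤ -α * Deltal mbar f c x ρ d + τ * α ^ 2 * ‖d‖ ^ 2) :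
    (∃ j : ℕ, phipen mbar f c (x + γ ^ j • d) ρ - phipen mbar f c x ρ
        ≤ -θα * γ ^ j * Deltal mbar f c x ρ d) ∧
    (∀ j : ℕ,
      (phipen mbar f c (x + γ ^ j • d) ρ - phipen mbar f c x ρ
          ≤ -θα * γ ^ j * Deltal mbar f c x ρ d) →
      (∀ j' : ℕ, (phipen mbar f c (x + γ ^ j' • d) ρ - phipen mbar f c x ρ
          ≤ -θα * γ ^ j' * Deltal mbar f c x ρ d) → γ ^ j' ≤ γ ^ j) →
      min 1 (γ * (1 - θα) * Deltal mbar f c x ρ d / (τ * ‖d‖ ^ 2)) ≤ γ ^ j) := by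

  obtain ⟨hγ0, hγ1⟩ := hγ
  obtain ⟨hθ0, hθ1⟩ := hθα
  have hdn : (0:ℝ) < ‖d‖ := norm_pos_iff.mpr hd
  set Δ := Deltal mbar f c x ρ d with hΔdef
  have h1θ : 0 < 1 - θα := by linarith
  have hA : 0 < (1 - θα) * Δ / (τ * ‖d‖ ^ 2) := by positivity
  have key : ∀ α : ℝ, 0 < α → α ≤ 1 → α ≤ (1 - θα) * Δ / (τ * ‖d‖ ^ 2) →
      phipen mbar f c (x + α • d) ρ - phipen mbar f c x ρ ≤ -θα * α * Δ := by
    intro α hα0 hα1 hαA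
    have h1 := hdesc α ⟨hα0, hα1⟩
    have h2 : α * (τ * ‖d‖ ^ 2) ≤ (1 - θα) * Δ := by
      rwa [← le_div_iff₀ (by positivity)]
    nlinarith [mul_le_mul_of_nonneg_left h2 hα0.le]
  constructor
  · obtain ⟨j, hj⟩ := exists_pow_lt_of_lt_one (lt_min one_pos hA) hγ1
    refine ⟨j, key _ (pow_pos hγ0 j) (pow_le_one₀ hγ0.le hγ1.le)
      (le_of_lt (lt_of_lt_of_le hj (min_le_right _ _)))⟩
  · intro j hj hmax
    match j with
    | 0 => simpa using min_le_left 1 (γ * (1 - θα) * Δ / (τ * ‖d‖ ^ 2))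
    | Nat.succ k =>
      have hfail : ¬ (phipen mbar f c (x + γ ^ k • d) ρ - phipen mbar f c x ρ
          ≤ -θα * γ ^ k * Δ) := by
        intro h
        have h1 := hmax k h
        have h2 : γ ^ (k + 1) < γ ^ k :=
          pow_lt_pow_right_of_lt_one₀ hγ0 hγ1 (Nat.lt_succ_self k)
        simp only [Nat.succ_eq_add_one] at h1
        linarith
      have hAk : (1 - θα) * Δ / (τ * ‖d‖ ^ 2) < γ ^ k := by
        by_contra hle
        exact hfail (key _ (pow_pos hγ0 k) (pow_le_one₀ hγ0.le hγ1.le) (le_of_not_gt hle))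
      have h3 : γ * ((1 - θα) * Δ / (τ * ‖d‖ ^ 2)) ≤ γ ^ (k + 1) := by
        have h4 : γ ^ (k + 1) = γ * γ ^ k := by ring
        rw [h4]
        exact mul_le_mul_of_nonneg_left hAk.le hγ0.le
      calc min 1 (γ * (1 - θα) * Δ / (τ * ‖d‖ ^ 2))
          ≤ γ * (1 - θα) * Δ / (τ * ‖d‖ ^ 2) := min_le_right _ _
        _ = γ * ((1 - θα) * Δ / (τ * ‖d‖ ^ 2)) := by ring
        _ ≤ γ ^ (k + 1) := h3
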